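/- arXiv:2001.11179 — 3 statements merged into one kernel-verified Lean document; each statement's English description precedes it below -/
import Mathlib

section
/- Let L be the matrix-valued Laplacian of a matrix-weighted graph on n nodes with symmetric positive semidefinite edge weights A_ij. Then the null space of L consists exactly of those vectors x = (x_1, …, x_n) ∈ ℝ^{dn} (each x_i ∈ ℝ^d) such that A_ij (x_i − x_j) = 0 for all pairs i, j. In particular null(L) = span{R, H}, where R is the consensus subspace and H = {(v_1,…,v_n) : (v_i − v_j) ∈ null(A_ij) for every edge (i,j)}. -/
open Matrix Finset Filter

/-- The matrix-valued Laplacian of a matrix-weighted graph on `n` nodes with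
state dimension `d`: the `(i,j)` off-diagonal block is `-A i j` and the `i`-th
diagonal block is `∑ k ≠ i, A i k`. -/
noncomputable def mwLaplacian {n d : ℕ} (A : Fin n → Fin n → Matrix (Fin d) (Fin d) ℝ) :
    Matrix (Fin n × Fin d) (Fin n × Fin d) ℝ :=
  fun p q =>
    if p.1 = q.1 then ∑ k ∈ Finset.univ.erase p.1, A p.1 k p.2 q.2
    else -(A p.1 q.1 p.2 q.2)

/-- Membership in the consensus subspace `R = range (1ₙ ⊗ I_d)`:
all blocks of `x` are equal. -/
def isConsensus {n d : ℕ} (x : Fin n × Fin d → ℝ) : Prop :=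
  ∃ v : Fin d → ℝ, ∀ p : Fin n × Fin d, x p = v p.2

/-- The Euclidean norm on `ι → ℝ`. -/
noncomputable def euclNorm {ι : Type*} [Fintype ι] (x : ι → ℝ) : ℝ :=
  Real.sqrt (x ⬝ᵥ x)

/-!
With symmetric weights, `2 xᵀ L x = ∑ i j, (x_i - x_j)ᵀ A_ij (x_i - x_j)`, a sum of nonnegative
terms because every `A_ij` is positive semidefinite. Hence `L x = 0` forces each term to vanish,
and for a positive semidefinite `M`, `vᵀ M v = 0` iff `M v = 0`. Conversely, the `i`-th block of
`L x` is `∑ j, A_ij (x_i - x_j)`.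
-/

theorem sum_sum_dotProduct_mulVec_sub_eq_two_mul {ι κ R : Type*} [Fintype ι] [Fintype κ]
    [CommRing R] {A : ι → ι → Matrix κ κ R} (hA : ∀ i j, A i j = A j i) (y : ι → κ → R) :
    ∑ i, ∑ j, (y i - y j) ⬝ᵥ A i j *ᵥ (y i - y j)
      = 2 * ∑ i, ∑ j, y i ⬝ᵥ A i j *ᵥ (y i - y j) := by
  have swap : ∑ i, ∑ j, y j ⬝ᵥ A i j *ᵥ (y i - y j)
      = -∑ i, ∑ j, y i ⬝ᵥ A i j *ᵥ (y i - y j) := by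
    rw [Finset.sum_comm, ← Finset.sum_neg_distrib]
    refine Finset.sum_congr rfl fun i _ => ?_
    rw [← Finset.sum_neg_distrib]
    refine Finset.sum_congr rfl fun j _ => ?_
    rw [hA, ← neg_sub, mulVec_neg, dotProduct_neg]
  simp only [sub_dotProduct, Finset.sum_sub_distrib, swap]
  ring

theorem mwLaplacian_apply {n d : ℕ} (A : Fin n → Fin n → Matrix (Fin d) (Fin d) ℝ)
    (i j : Fin n) (a b : Fin d) :
    mwLaplacian A (i, a) (j, b) = (if i = j then ∑ k, A i k a b else 0) - A i j a b := by
  unfold mwLaplacian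
  split_ifs with h
  · subst h
    rw [Finset.sum_erase_eq_sub (Finset.mem_univ i)]
  · ring

theorem mwLaplacian_mulVec_apply {n d : ℕ} (A : Fin n → Fin n → Matrix (Fin d) (Fin d) ℝ)
    (x : Fin n × Fin d → ℝ) (i : Fin n) (a : Fin d) :
    (mwLaplacian A *ᵥ x) (i, a)
      = ∑ k, (A i k *ᵥ (Function.curry x i - Function.curry x k)) a := by
  simp only [mulVec, dotProduct, Fintype.sum_prod_type, mwLaplacian_apply, sub_mul, ite_mul,
    zero_mul, Finset.sum_sub_distrib, mul_sub, Finset.sum_mul, Function.curry_apply, Pi.sub_apply]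
  congr 1
  rw [Finset.sum_comm]
  simp only [Finset.sum_ite_eq, Finset.mem_univ, if_true]
  exact Finset.sum_comm

theorem dotProduct_mwLaplacian_mulVec {n d : ℕ} (A : Fin n → Fin n → Matrix (Fin d) (Fin d) ℝ)
    (x : Fin n × Fin d → ℝ) :
    x ⬝ᵥ mwLaplacian A *ᵥ x
      = ∑ i, ∑ k, Function.curry x i ⬝ᵥ A i k *ᵥ (Function.curry x i - Function.curry x k) := by
  simp only [dotProduct, Fintype.sum_prod_type, mwLaplacian_mulVec_apply, Finset.mul_sum]
  exact Finset.sum_congr rfl fun i _ => Finset.sum_comm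

theorem sum_sum_dotProduct_mulVec_eq_zero_iff {ι κ : Type*} [Fintype ι] [Fintype κ]
    {A : ι → ι → Matrix κ κ ℝ} (hA : ∀ i j, (A i j).PosSemidef) (v : ι → ι → κ → ℝ) :
    ∑ i, ∑ j, v i j ⬝ᵥ A i j *ᵥ v i j = 0 ↔ ∀ i j, A i j *ᵥ v i j = 0 := by
  have hterm : ∀ i j, v i j ⬝ᵥ A i j *ᵥ v i j = 0 ↔ A i j *ᵥ v i j = 0 := fun i j => by
    simpa only [star_trivial] using (hA i j).dotProduct_mulVec_zero_iff (v i j)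
  have hnonneg : ∀ i j, 0 ≤ v i j ⬝ᵥ A i j *ᵥ v i j := fun i j => by
    simpa only [star_trivial] using (hA i j).dotProduct_mulVec_nonneg (v i j)
  rw [Fintype.sum_eq_zero_iff_of_nonneg fun i => Fintype.sum_nonneg (hnonneg i)]
  refine funext_iff.trans (forall_congr' fun i => ?_)
  rw [Pi.zero_apply, Fintype.sum_eq_zero_iff_of_nonneg (hnonneg i), funext_iff]
  exact forall_congr' (hterm i)

theorem laplacian_null_space_general {n d : ℕ}
    (A : Fin n → Fin n → Matrix (Fin d) (Fin d) ℝ)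
    (hpsd : ∀ i j, (A i j).PosSemidef)
    (hsym : ∀ i j, A i j = A j i) :
    ∀ x : Fin n × Fin d → ℝ,
      (mwLaplacian A).mulVec x = 0 ↔
        ∀ i j : Fin n, (A i j).mulVec (fun a => x (i, a) - x (j, a)) = 0 := by
  intro x
  constructor
  · intro hx
    refine (sum_sum_dotProduct_mulVec_eq_zero_iff hpsd
      fun i j => Function.curry x i - Function.curry x j).mp ?_
    rw [sum_sum_dotProduct_mulVec_sub_eq_two_mul hsym, ← dotProduct_mwLaplacian_mulVec, hx,
      dotProduct_zero, mul_zero]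
  · intro h
    ext ⟨i, a⟩
    rw [mwLaplacian_mulVec_apply]
    exact Finset.sum_eq_zero fun k _ => congrFun (h i k) a

/-- The null space of the matrix-valued Laplacian consists exactly of
those `x = (x_1, …, x_n)` with `A i j • (x_i - x_j) = 0` for all pairs `i, j`
(this set is `span{R, H}` of the paper). -/
theorem laplacian_null_space {n d : ℕ} (hn : 2 ≤ n) (hd : 1 ≤ d)
    (A : Fin n → Fin n → Matrix (Fin d) (Fin d) ℝ)
    (hpsd : ∀ i j, (A i j).PosSemidef)
    (hsym : ∀ i j, A i j = A j i)
    (hdiag : ∀ i, A i i = 0) :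
    ∀ x : Fin n × Fin d → ℝ,
      (mwLaplacian A).mulVec x = 0 ↔
        ∀ i j : Fin n, (A i j).mulVec (fun a => x (i, a) - x (j, a)) = 0 :=
  laplacian_null_space_general A hpsd hsym
end

section
/- Let L^0, L^1, …, L^{m−1} be matrix-valued Laplacians of matrix-weighted graphs on n nodes (so each L^k is symmetric positive semidefinite and R ⊆ null(L^k)), let Δt_0, …, Δt_{m−1} > 0, and set Φ = exp(−Δt_{m−1} L^{m−1}) ··· exp(−Δt_1 L^1) exp(−Δt_0 L^0). Then the following are equivalent: (i) ⋂_{k=0}^{m−1} null(L^k) = R; (ii) ‖Φ x‖ < ‖x‖ for every nonzero x orthogonal to R. (Statement (ii) is equivalent to the (d+1)-st largest eigenvalue μ_{d+1} of Φ^T Φ being strictly less than 1.) -/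
open Matrix Finset Filter

/-- The ordered product `E (m-1) * ⋯ * E 1 * E 0` of a sequence of matrices. -/
noncomputable def prodSeq {ι : Type*} [Fintype ι] [DecidableEq ι]
    (E : ℕ → Matrix ι ι ℝ) : ℕ → Matrix ι ι ℝ
  | 0 => 1
  | k + 1 => E k * prodSeq E k

/-!
Diagonalising a positive semidefinite `M = U diag(λ) Uᵀ` gives `exp(-M) = U diag(e^{-λ}) Uᵀ`,
so `exp(-M)` is a contraction that preserves the norm of `x` exactly when `M x = 0`, and then
fixes `x`. A product `Φ` of such maps preserves the norm of `x` only if every factor does, so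
`‖Φ x‖ = ‖x‖` exactly on `⋂ₖ null(Lᵏ)`. Since this intersection always contains `R`, it equals
`R` iff `Φ` is a strict contraction on `Rᗮ`.
-/

lemma Real.exp_neg_mul_self_le {a : ℝ} (ha : 0 ≤ a) (y : ℝ) :
    Real.exp (-a) * y * (Real.exp (-a) * y) ≤ y * y := by
  have h : Real.exp (-a) * Real.exp (-a) ≤ 1 := by
    rw [← Real.exp_add, Real.exp_le_one_iff]
    linarith
  calc Real.exp (-a) * y * (Real.exp (-a) * y) = Real.exp (-a) * Real.exp (-a) * (y * y) := by
        ring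
    _ ≤ y * y := mul_le_of_le_one_left (mul_self_nonneg y) h

lemma Real.exp_neg_mul_self_eq_iff {a : ℝ} (ha : 0 ≤ a) (y : ℝ) :
    Real.exp (-a) * y * (Real.exp (-a) * y) = y * y ↔ a * y = 0 := by
  rcases eq_or_ne y 0 with rfl | hy
  · simp
  rw [show Real.exp (-a) * y * (Real.exp (-a) * y) = Real.exp (-(a + a)) * (y * y) by
      rw [neg_add, Real.exp_add]; ring,
    mul_eq_right₀ (mul_self_ne_zero.2 hy), Real.exp_eq_one_iff, mul_eq_zero, or_iff_left hy]
  constructor <;> intro h <;> linarith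

namespace Matrix

section Coordinates

variable {ι : Type*} [Fintype ι]

lemma dotProduct_self_exp_neg_mul_le {a : ι → ℝ} (ha : 0 ≤ a) (y : ι → ℝ) :
    ((fun i => Real.exp (-a i)) * y) ⬝ᵥ ((fun i => Real.exp (-a i)) * y) ≤ y ⬝ᵥ y :=
  Finset.sum_le_sum fun i _ => Real.exp_neg_mul_self_le (ha i) (y i)

lemma dotProduct_self_exp_neg_mul_eq_iff {a : ι → ℝ} (ha : 0 ≤ a) (y : ι → ℝ) :
    ((fun i => Real.exp (-a i)) * y) ⬝ᵥ ((fun i => Real.exp (-a i)) * y) = y ⬝ᵥ y ↔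
      a * y = 0 := by
  simp only [dotProduct, Pi.mul_apply]
  rw [Finset.sum_eq_sum_iff_of_le fun i _ => Real.exp_neg_mul_self_le (ha i) (y i), funext_iff]
  simp [Real.exp_neg_mul_self_eq_iff (ha _)]

end Coordinates

section Unitary

variable {ι : Type*} [Fintype ι] [DecidableEq ι]

lemma dotProduct_self_unitary_mulVec (U : unitaryGroup ι ℝ) (v : ι → ℝ) :
    ((U : Matrix ι ι ℝ) *ᵥ v) ⬝ᵥ ((U : Matrix ι ι ℝ) *ᵥ v) = v ⬝ᵥ v := by
  rw [dotProduct_mulVec, vecMul_mulVec, ← conjTranspose_eq_transpose_of_trivial,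
    ← star_eq_conjTranspose, Unitary.coe_star_mul_self, vecMul_one]

lemma unitary_mulVec_eq_zero_iff (U : unitaryGroup ι ℝ) {v : ι → ℝ} :
    (U : Matrix ι ι ℝ) *ᵥ v = 0 ↔ v = 0 := by
  rw [← dotProduct_self_eq_zero, dotProduct_self_unitary_mulVec, dotProduct_self_eq_zero]

lemma unitary_conj_diagonal_mulVec (U : unitaryGroup ι ℝ) (f x : ι → ℝ) :
    ((U : Matrix ι ι ℝ) * diagonal f * star (U : Matrix ι ι ℝ)) *ᵥ x
      = (U : Matrix ι ι ℝ) *ᵥ (f * (star (U : Matrix ι ι ℝ) *ᵥ x)) := by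
  rw [← mulVec_mulVec, ← mulVec_mulVec]
  congr 1
  ext i
  simp [mulVec_diagonal]

lemma exp_unitary_conj_diagonal (U : unitaryGroup ι ℝ) (f : ι → ℝ) :
    NormedSpace.exp ((U : Matrix ι ι ℝ) * diagonal f * star (U : Matrix ι ι ℝ))
      = (U : Matrix ι ι ℝ) * diagonal (fun i => Real.exp (f i)) * star (U : Matrix ι ι ℝ) := by
  have h := exp_units_conj (Unitary.toUnits U) (diagonal f)
  simp only [Unitary.val_toUnits_apply, Unitary.val_inv_toUnits_apply,
    UnitaryGroup.inv_val] at h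
  rw [h, exp_diagonal, Pi.exp_def, Real.exp_eq_exp_ℝ]

lemma IsHermitian.eq_unitary_conj_diagonal {A : Matrix ι ι ℝ} (hA : A.IsHermitian) :
    A = (hA.eigenvectorUnitary : Matrix ι ι ℝ) * diagonal hA.eigenvalues
      * star (hA.eigenvectorUnitary : Matrix ι ι ℝ) := by
  conv_lhs => rw [hA.spectral_theorem]
  simp [Unitary.conjStarAlgAut_apply]

end Unitary

variable {ι : Type*} [Fintype ι] [DecidableEq ι]

lemma exp_mulVec_of_mulVec_eq_zero {A : Matrix ι ι ℝ} {x : ι → ℝ} (hx : A *ᵥ x = 0) :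
    NormedSpace.exp A *ᵥ x = x := by
  let : NormedRing (Matrix ι ι ℝ) := Matrix.linftyOpNormedRing
  let : NormedAlgebra ℝ (Matrix ι ι ℝ) := Matrix.linftyOpNormedAlgebra
  have hseries := (NormedSpace.exp_series_hasSum_exp' (𝕂 := ℝ) A).map
    (mulVec.addMonoidHomLeft x) (continuous_id.matrix_mulVec continuous_const)
  have hterms : ∀ k ≠ 0, ((k.factorial : ℝ)⁻¹ • A ^ k) *ᵥ x = 0 := by
    intro k hk
    obtain ⟨k, rfl⟩ := Nat.exists_eq_succ_of_ne_zero hk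
    rw [pow_succ, smul_mulVec, ← mulVec_mulVec, hx, mulVec_zero, smul_zero]
  have hsum := hseries.unique (hasSum_single 0 hterms)
  simp only [Nat.factorial_zero, Nat.cast_one, inv_one, pow_zero, one_smul, one_mulVec] at hsum
  exact hsum

namespace PosSemidef

variable {M : Matrix ι ι ℝ}

lemma exp_neg_eq (hM : M.PosSemidef) :
    NormedSpace.exp (-M) = (hM.1.eigenvectorUnitary : Matrix ι ι ℝ)
      * diagonal (fun i => Real.exp (-hM.1.eigenvalues i))
      * star (hM.1.eigenvectorUnitary : Matrix ι ι ℝ) := by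
  conv_lhs => rw [hM.1.eq_unitary_conj_diagonal]
  rw [← Matrix.neg_mul, ← Matrix.mul_neg, diagonal_neg, exp_unitary_conj_diagonal]

lemma dotProduct_exp_neg_mulVec_self_le (hM : M.PosSemidef) (x : ι → ℝ) :
    (NormedSpace.exp (-M) *ᵥ x) ⬝ᵥ (NormedSpace.exp (-M) *ᵥ x) ≤ x ⬝ᵥ x := by
  rw [hM.exp_neg_eq, unitary_conj_diagonal_mulVec, dotProduct_self_unitary_mulVec,
    ← dotProduct_self_unitary_mulVec (star hM.1.eigenvectorUnitary) x]
  exact dotProduct_self_exp_neg_mul_le hM.eigenvalues_nonneg _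

lemma dotProduct_exp_neg_mulVec_self_eq_iff (hM : M.PosSemidef) (x : ι → ℝ) :
    (NormedSpace.exp (-M) *ᵥ x) ⬝ᵥ (NormedSpace.exp (-M) *ᵥ x) = x ⬝ᵥ x ↔ M *ᵥ x = 0 := by
  conv_rhs => rw [hM.1.eq_unitary_conj_diagonal]
  rw [hM.exp_neg_eq, unitary_conj_diagonal_mulVec, dotProduct_self_unitary_mulVec,
    ← dotProduct_self_unitary_mulVec (star hM.1.eigenvectorUnitary) x,
    unitary_conj_diagonal_mulVec, unitary_mulVec_eq_zero_iff]
  exact dotProduct_self_exp_neg_mul_eq_iff hM.eigenvalues_nonneg _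

lemma exp_neg_mulVec_eq_self_iff (hM : M.PosSemidef) (x : ι → ℝ) :
    NormedSpace.exp (-M) *ᵥ x = x ↔ M *ᵥ x = 0 :=
  ⟨fun h => (hM.dotProduct_exp_neg_mulVec_self_eq_iff x).1 (by rw [h]),
    fun h => exp_mulVec_of_mulVec_eq_zero (by rw [neg_mulVec, h, neg_zero])⟩

end PosSemidef

end Matrix

section ProdSeq

variable {ι : Type*} [Fintype ι] [DecidableEq ι] {E : ℕ → Matrix ι ι ℝ}

lemma prodSeq_succ_mulVec (k : ℕ) (x : ι → ℝ) :
    prodSeq E (k + 1) *ᵥ x = E k *ᵥ (prodSeq E k *ᵥ x) :=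
  (mulVec_mulVec _ _ _).symm

lemma prodSeq_mulVec_eq_self {m : ℕ} {x : ι → ℝ} (hx : ∀ k < m, E k *ᵥ x = x) :
    prodSeq E m *ᵥ x = x := by
  induction m with
  | zero => exact one_mulVec x
  | succ m ih =>
    obtain ⟨hx, hxm⟩ := Nat.forall_lt_succ_right.1 hx
    rw [prodSeq_succ_mulVec, ih hx, hxm]

lemma dotProduct_self_prodSeq_mulVec_le {m : ℕ}
    (hE : ∀ k < m, ∀ x : ι → ℝ, (E k *ᵥ x) ⬝ᵥ (E k *ᵥ x) ≤ x ⬝ᵥ x) (x : ι → ℝ) :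
    (prodSeq E m *ᵥ x) ⬝ᵥ (prodSeq E m *ᵥ x) ≤ x ⬝ᵥ x := by
  induction m with
  | zero => rw [prodSeq, one_mulVec]
  | succ m ih =>
    obtain ⟨hE, hEm⟩ := Nat.forall_lt_succ_right.1 hE
    rw [prodSeq_succ_mulVec]
    exact (hEm _).trans (ih hE)

lemma forall_mulVec_eq_self_of_dotProduct_self_prodSeq_mulVec_eq {m : ℕ}
    (hE : ∀ k < m, ∀ x : ι → ℝ, (E k *ᵥ x) ⬝ᵥ (E k *ᵥ x) ≤ x ⬝ᵥ x)
    (hfix : ∀ k < m, ∀ x : ι → ℝ, (E k *ᵥ x) ⬝ᵥ (E k *ᵥ x) = x ⬝ᵥ x → E k *ᵥ x = x)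
    {x : ι → ℝ} (hx : (prodSeq E m *ᵥ x) ⬝ᵥ (prodSeq E m *ᵥ x) = x ⬝ᵥ x) :
    ∀ k < m, E k *ᵥ x = x := by
  induction m with
  | zero => simp
  | succ m ih =>
    obtain ⟨hE, hEm⟩ := Nat.forall_lt_succ_right.1 hE
    obtain ⟨hfix, hfixm⟩ := Nat.forall_lt_succ_right.1 hfix
    rw [prodSeq_succ_mulVec] at hx
    -- `‖E_m (Φ x)‖ ≤ ‖Φ x‖ ≤ ‖x‖` with equality at both ends forces `‖Φ x‖ = ‖x‖`.
    have hinit : ∀ k < m, E k *ᵥ x = x :=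
      ih hE hfix (le_antisymm (dotProduct_self_prodSeq_mulVec_le hE x) (hx ▸ hEm _))
    rw [prodSeq_mulVec_eq_self hinit] at hx
    exact Nat.forall_lt_succ_right.2 ⟨hinit, hfixm x hx⟩

end ProdSeq

lemma exists_isConsensus_add_orthogonal {n d : ℕ} (x : Fin n × Fin d → ℝ) :
    ∃ c w : Fin n × Fin d → ℝ, isConsensus c ∧ (∀ y, isConsensus y → w ⬝ᵥ y = 0) ∧
      x = c + w := by
  set v : Fin d → ℝ := fun j => (∑ i, x (i, j)) / n
  refine ⟨fun p => v p.2, x - fun p => v p.2, ⟨v, fun _ => rfl⟩, ?_, (add_sub_cancel _ _).symm⟩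
  rintro y ⟨u, hu⟩
  have hcol : ∀ j, ∑ i, (x (i, j) - v j) = 0 := by
    intro j
    rcases Nat.eq_zero_or_pos n with rfl | hn
    · simp
    · have hn' : (n : ℝ) ≠ 0 := by positivity
      simp [v, Finset.sum_sub_distrib, mul_div_cancel₀ _ hn']
  calc (x - fun p => v p.2) ⬝ᵥ y = ∑ j, (∑ i, (x (i, j) - v j)) * u j := by
        simp only [dotProduct, Fintype.sum_prod_type, hu, Pi.sub_apply, Finset.sum_mul]
        exact Finset.sum_comm
    _ = 0 := by simp [hcol]

theorem inter_null_eq_consensus_iff_contraction_general {n d m : ℕ}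
    (L : ℕ → Matrix (Fin n × Fin d) (Fin n × Fin d) ℝ) (Δt : ℕ → ℝ)
    (hpsd : ∀ k < m, (L k).PosSemidef)
    (hR : ∀ k < m, ∀ x : Fin n × Fin d → ℝ, isConsensus x → (L k).mulVec x = 0)
    (hΔ : ∀ k < m, 0 < Δt k) :
    (∀ x : Fin n × Fin d → ℝ,
        ((∀ k < m, (L k).mulVec x = 0) ↔ isConsensus x))
      ↔ (∀ x : Fin n × Fin d → ℝ, x ≠ 0 →
          (∀ y : Fin n × Fin d → ℝ, isConsensus y → x ⬝ᵥ y = 0) →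
          euclNorm
            ((prodSeq (fun k => NormedSpace.exp (-(Δt k • L k))) m).mulVec x)
            < euclNorm x) := by
  have hM : ∀ k < m, (Δt k • L k).PosSemidef := fun k hk => (hpsd k hk).smul (hΔ k hk).le
  have hfix : ∀ k < m, ∀ x, NormedSpace.exp (-(Δt k • L k)) *ᵥ x = x ↔ L k *ᵥ x = 0 :=
    fun k hk x => by
      rw [(hM k hk).exp_neg_mulVec_eq_self_iff, smul_mulVec, smul_eq_zero,
        or_iff_right (hΔ k hk).ne']
  have hle := fun k hk => (hM k hk).dotProduct_exp_neg_mulVec_self_le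
  have hnorm_fix := fun k hk x h => ((hM k hk).exp_neg_mulVec_eq_self_iff x).2
    (((hM k hk).dotProduct_exp_neg_mulVec_self_eq_iff x).1 h)
  constructor
  · intro hnull x hx hxR
    refine Real.sqrt_lt_sqrt (Finset.sum_nonneg fun i _ => mul_self_nonneg _) ?_
    refine (dotProduct_self_prodSeq_mulVec_le hle x).lt_of_ne fun hΦx => hx ?_
    have hxR' : isConsensus x := (hnull x).1 fun k hk => (hfix k hk x).1
      (forall_mulVec_eq_self_of_dotProduct_self_prodSeq_mulVec_eq hle hnorm_fix hΦx k hk)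
    exact dotProduct_self_eq_zero.1 (hxR x hxR')
  · intro hcontr x
    refine ⟨fun hx => ?_, fun hx k hk => hR k hk x hx⟩
    obtain ⟨c, w, hc, hw, rfl⟩ := exists_isConsensus_add_orthogonal x
    have hΦc := prodSeq_mulVec_eq_self fun k hk => (hfix k hk c).2 (hR k hk c hc)
    have hΦ := prodSeq_mulVec_eq_self fun k hk => (hfix k hk _).2 (hx k hk)
    rw [mulVec_add, hΦc, add_right_inj] at hΦ
    obtain rfl : w = 0 := by
      by_contra hw0
      exact (hcontr w hw0 hw).ne (by rw [hΦ])
    simpa using hc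

/-- For matrix-valued Laplacians `L^0, …, L^{m-1}` (symmetric PSD with
`R ⊆ null(L^k)`) and dwell times `Δt k > 0`, with
`Φ = exp(-Δt_{m-1} L^{m-1}) ⋯ exp(-Δt_0 L^0)`, the intersection of the null spaces
equals `R` if and only if `‖Φ x‖ < ‖x‖` for every nonzero `x` orthogonal to `R`
(equivalently, `μ_{d+1}(ΦᵀΦ) < 1`). -/
theorem inter_null_eq_consensus_iff_contraction {n d m : ℕ} (hn : 2 ≤ n) (hd : 1 ≤ d)
    (L : ℕ → Matrix (Fin n × Fin d) (Fin n × Fin d) ℝ) (Δt : ℕ → ℝ)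
    (hpsd : ∀ k < m, (L k).PosSemidef)
    (hR : ∀ k < m, ∀ x : Fin n × Fin d → ℝ, isConsensus x → (L k).mulVec x = 0)
    (hΔ : ∀ k < m, 0 < Δt k) :
    (∀ x : Fin n × Fin d → ℝ,
        ((∀ k < m, (L k).mulVec x = 0) ↔ isConsensus x))
      ↔ (∀ x : Fin n × Fin d → ℝ, x ≠ 0 →
          (∀ y : Fin n × Fin d → ℝ, isConsensus y → x ⬝ᵥ y = 0) →
          euclNorm
            ((prodSeq (fun k => NormedSpace.exp (-(Δt k • L k))) m).mulVec x)
            < euclNorm x) :=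
  inter_null_eq_consensus_iff_contraction_general L Δt hpsd hR hΔ
end

section
/- Let L ∈ ℝ^{N×N} be a symmetric matrix and x_0 ∈ ℝ^N. Define x : [1, ∞) → ℝ^N by x(t) = exp((t^{−1} − 1) L) x_0. Then x satisfies the time-varying linear differential equation x'(t) = −t^{−2} L x(t) for all t ≥ 1 with x(1) = x_0, and lim_{t→∞} x(t) = exp(−L) x_0. (In particular, if null(L) equals the consensus subspace but exp(−L) x_0 is not a consensus vector, the time-varying system with Laplacian t^{−2} L does not reach average consensus, even though the integral Laplacian over every time window has null space equal to the consensus subspace.) -/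
open Matrix Finset Filter

/-! Because `L` commutes with its own exponential, the chain rule gives
`d/dt exp((t⁻¹ - 1) L) = -t⁻² L exp((t⁻¹ - 1) L)`; the limit is continuity of `exp`
at `-L`, since `t⁻¹ - 1 → -1`. -/

open NormedSpace Topology

section LinftyOpNorm

-- Any norm on matrices would do: all of them induce the product topology used in the statement.
attribute [local instance] Matrix.linftyOpNormedAddCommGroup Matrix.linftyOpNormedSpace
  Matrix.linftyOpNormedRing Matrix.linftyOpNormedAlgebra

variable {𝕜 : Type*} [RCLike 𝕜] {n : Type*} [Fintype n]

theorem HasDerivAt.matrix_mulVec_const {m : Type*} [Fintype m] {M : 𝕜 → Matrix m n 𝕜}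
    {M' : Matrix m n 𝕜} {t : 𝕜} (hM : HasDerivAt M M' t) (v : n → 𝕜) :
    HasDerivAt (fun s => M s *ᵥ v) (M' *ᵥ v) t := by
  exact (LinearMap.toContinuousLinearMap ((mulVecBilin 𝕜 𝕜).flip v)).hasFDerivAt.comp_hasDerivAt
    t hM

variable [DecidableEq n]

theorem hasDerivAt_exp_smul_mulVec (A : Matrix n n 𝕜) (v : n → 𝕜) {f : 𝕜 → 𝕜} {f' t : 𝕜}
    (hf : HasDerivAt f f' t) :
    HasDerivAt (fun s => exp (f s • A) *ᵥ v) (f' • (A *ᵥ (exp (f t • A) *ᵥ v))) t := by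
  have := ((hasDerivAt_exp_smul_const' A (f t)).scomp t hf).matrix_mulVec_const v
  rwa [smul_mulVec, ← mulVec_mulVec] at this

theorem tendsto_exp_smul_mulVec {α : Type*} {l : Filter α} (A : Matrix n n 𝕜) (v : n → 𝕜)
    {f : α → 𝕜} {c : 𝕜} (hf : Tendsto f l (𝓝 c)) :
    Tendsto (fun s => exp (f s • A) *ᵥ v) l (𝓝 (exp (c • A) *ᵥ v)) :=
  ((continuous_id.matrix_mulVec continuous_const).tendsto _).comp
    ((exp_continuous.tendsto _).comp (hf.smul_const A))

end LinftyOpNorm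

theorem rescaled_flow_solves_ode_and_converges_general {N : ℕ}
    (L : Matrix (Fin N) (Fin N) ℝ) (x0 : Fin N → ℝ) :
    (∀ t : ℝ, 1 ≤ t →
      HasDerivAt (fun s : ℝ => (NormedSpace.exp ((s⁻¹ - 1) • L)).mulVec x0)
        ((-(t ^ 2)⁻¹) •
          L.mulVec ((NormedSpace.exp ((t⁻¹ - 1) • L)).mulVec x0)) t) ∧
    (NormedSpace.exp (((1 : ℝ)⁻¹ - 1) • L)).mulVec x0 = x0 ∧
    Tendsto (fun t : ℝ => (NormedSpace.exp ((t⁻¹ - 1) • L)).mulVec x0) atTop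
      (nhds ((NormedSpace.exp (-L)).mulVec x0)) := by
  refine ⟨fun t ht => ?_, by simp, ?_⟩
  · have ht0 : t ≠ 0 := by positivity
    exact hasDerivAt_exp_smul_mulVec L x0 ((hasDerivAt_inv ht0).sub_const 1)
  · have h := tendsto_exp_smul_mulVec L x0 (tendsto_inv_atTop_zero.sub_const (1 : ℝ))
    rwa [zero_sub, neg_one_smul] at h

/-- For a symmetric matrix `L` and `x_0 ∈ ℝ^N`, the curve
`x(t) = exp((t⁻¹ - 1) L) x_0` satisfies `x'(t) = -t⁻² L x(t)` for all `t ≥ 1`,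
with `x(1) = x_0`, and `x(t) → exp(-L) x_0` as `t → ∞`. -/
theorem rescaled_flow_solves_ode_and_converges {N : ℕ}
    (L : Matrix (Fin N) (Fin N) ℝ) (hL : L.IsSymm) (x0 : Fin N → ℝ) :
    (∀ t : ℝ, 1 ≤ t →
      HasDerivAt (fun s : ℝ => (NormedSpace.exp ((s⁻¹ - 1) • L)).mulVec x0)
        ((-(t ^ 2)⁻¹) •
          L.mulVec ((NormedSpace.exp ((t⁻¹ - 1) • L)).mulVec x0)) t) ∧
    (NormedSpace.exp (((1 : ℝ)⁻¹ - 1) • L)).mulVec x0 = x0 ∧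
    Tendsto (fun t : ℝ => (NormedSpace.exp ((t⁻¹ - 1) • L)).mulVec x0) atTop
      (nhds ((NormedSpace.exp (-L)).mulVec x0)) :=
  rescaled_flow_solves_ode_and_converges_general L x0
end
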